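/- Non-normalizability of the generalized eigenfunctions: let ω ∈ ℝ and let φ : ℕ → ℂ solve the eigenvalue recurrence for ω and have plane-wave asymptotics with amplitude A ≠ 0. Then the sequence n ↦ |φ n|² is not summable, i.e. Σ_{n=0}^∞ |φ n|² = ∞, so φ does not define an element of ℓ²(ℕ, ℂ). -/

import Mathlib

/-- ξ(y) = √(y² + 1/16). -/
noncomputable def xi (y : ℝ) : ℝ := Real.sqrt (y ^ 2 + 1 / 16)

/-- χ(x) = log(2·√(4x² + 4x + 1) + √(16x² + 16x + 5)). -/
noncomputable def chi (x : ℝ) : ℝ :=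
  Real.log (2 * Real.sqrt (4 * x ^ 2 + 4 * x + 1) + Real.sqrt (16 * x ^ 2 + 16 * x + 5))

/-- f_s(x) = ξ(x+1/2)^(−1/2)·(A·exp(i·ω·χ(x)) − s·(conj A)·exp(−i·ω·χ(x))). -/
noncomputable def fpw (A : ℂ) (ω s x : ℝ) : ℂ :=
  ((xi (x + 1/2) ^ (-(1/2) : ℝ) : ℝ) : ℂ) *
    (A * Complex.exp (Complex.I * ω * chi x) -
      (s : ℂ) * (starRingEnd ℂ) A * Complex.exp (-(Complex.I * ω * chi x)))

/-- φ : ℕ → ℂ solves the eigenvalue recurrence for ω (φ n is the coefficient at spin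
j = n/2): φ 0 = 0 and ω·φ n = i·(n/2 + 3/4)·φ(n+1) − i·(n/2 + 1/4)·φ(n−1) for n ≥ 1. -/
def SolvesRec (ω : ℝ) (φ : ℕ → ℂ) : Prop :=
  φ 0 = 0 ∧ ∀ n : ℕ, 1 ≤ n →
    (ω : ℂ) * φ n =
      Complex.I * ((n : ℂ) / 2 + 3 / 4) * φ (n + 1) -
        Complex.I * ((n : ℂ) / 2 + 1 / 4) * φ (n - 1)

/-- φ has plane-wave asymptotics with amplitude A: there exist C > 0, Δ > 1 and N₀
such that |φ n − f_{(−1)^n}(n/2)| ≤ C·(n/2)^(−Δ) for all n ≥ N₀. -/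
def PlaneWaveAsymp (A : ℂ) (ω : ℝ) (φ : ℕ → ℂ) : Prop :=
  ∃ C : ℝ, 0 < C ∧ ∃ Δ : ℝ, 1 < Δ ∧ ∃ N₀ : ℕ, ∀ n : ℕ, N₀ ≤ n →
    ‖φ n - fpw A ω ((-1 : ℝ) ^ n) ((n : ℝ) / 2)‖ ≤ C * ((n : ℝ) / 2) ^ (-Δ)

/-!
Write `z(x) = A e^{iωχ(x)}`, so that `f₁(x) = 2i Im z(x) / √ξ(x+1/2)` and
`f₋₁(x) = 2 Re z(x) / √ξ(x+1/2)`. Since `χ(x) = arsinh(4x+2)`, the phase moves by `O(1/x)`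
from `x` to `x + 1/2`, so `z(n + 1/2) ≈ z(n)`, and the terms `2n` and `2n+1` of the plane wave
together carry `|f|² ≳ (Im z(n)² + Re z(n)²)/n = |A|²/n`: the plane wave is not
square-summable. The error `φ - f` is `O(n^{-Δ})` with `Δ > 1/2`, hence square-summable, so
`φ` is not square-summable either.
-/
open Real Complex Filter

lemma Summable.sq_norm_of_sq_norm_sub {ι E : Type*} [SeminormedAddGroup E] {f g : ι → E}
    (hf : Summable fun i => ‖f i‖ ^ 2) (hfg : Summable fun i => ‖f i - g i‖ ^ 2) :
    Summable fun i => ‖g i‖ ^ 2 :=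
  ((hf.add hfg).mul_left 2).of_nonneg_of_le (fun _ => by positivity) fun i =>
    calc ‖g i‖ ^ 2 ≤ (‖f i‖ + ‖f i - g i‖) ^ 2 :=
          pow_le_pow_left₀ (norm_nonneg _) (norm_le_norm_add_norm_sub _ _) 2
      _ ≤ 2 * (‖f i‖ ^ 2 + ‖f i - g i‖ ^ 2) := add_sq_le

lemma summable_sq_norm_of_le_rpow {E : Type*} [SeminormedAddGroup E] {u : ℕ → E}
    {C Δ : ℝ} (hΔ : 1 / 2 < Δ) (hu : ∀ᶠ n in atTop, ‖u n‖ ≤ C * (n : ℝ) ^ (-Δ)) :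
    Summable fun n => ‖u n‖ ^ 2 := by
  have hsum : Summable fun n : ℕ => C ^ 2 * (n : ℝ) ^ (-Δ * 2) :=
    (Real.summable_nat_rpow.mpr (by linarith)).mul_left _
  refine hsum.of_norm_bounded_eventually_nat (hu.mono fun n hn => ?_)
  rw [Real.norm_of_nonneg (by positivity), Real.rpow_mul (Nat.cast_nonneg n), Real.rpow_two,
    ← mul_pow]
  exact pow_le_pow_left₀ (norm_nonneg _) hn 2

lemma Real.arsinh_add_le {u h : ℝ} (hu : 0 < u) (hh : 0 ≤ h) :
    arsinh (u + h) ≤ arsinh u + h / u := by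
  rw [← arsinh_sinh (arsinh u + h / u), arsinh_le_arsinh, sinh_add, sinh_arsinh, cosh_arsinh]
  have hcosh := one_le_cosh (h / u)
  have hsinh : h / u ≤ sinh (h / u) := self_le_sinh_iff.mpr (by positivity)
  have hsqrt : u ≤ √(1 + u ^ 2) := Real.le_sqrt_of_sq_le (by linarith)
  have : u * (h / u) = h := by field_simp
  nlinarith [mul_le_mul hsqrt hsinh (by positivity) (by positivity)]

lemma Complex.sq_norm_sub_le_im_sq_add_re_sq (z w : ℂ) :
    ‖z‖ ^ 2 - 2 * ‖z‖ * ‖z - w‖ ≤ z.im ^ 2 + w.re ^ 2 := by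
  have hre : z.re ^ 2 - 2 * (|z.re| * |z.re - w.re|) ≤ w.re ^ 2 := by
    rw [← abs_mul]
    nlinarith [le_abs_self (z.re * (z.re - w.re)), sq_nonneg (z.re - w.re)]
  have hbound : |z.re| * |z.re - w.re| ≤ ‖z‖ * ‖z - w‖ :=
    mul_le_mul (abs_re_le_norm z) (by simpa using abs_re_le_norm (z - w)) (abs_nonneg _)
      (norm_nonneg _)
  rw [Complex.sq_norm, Complex.normSq_apply]
  nlinarith

lemma xi_pos (y : ℝ) : 0 < xi y := Real.sqrt_pos.mpr (by positivity)

lemma xi_le_add_one {y : ℝ} (hy : 0 ≤ y) : xi y ≤ y + 1 :=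
  Real.sqrt_le_iff.mpr ⟨by linarith, by nlinarith⟩

lemma sq_norm_xi_rpow_neg_half (y : ℝ) :
    ‖((xi y ^ (-(1 / 2) : ℝ) : ℝ) : ℂ)‖ ^ 2 = (xi y)⁻¹ := by
  rw [Complex.norm_real, Real.norm_of_nonneg (by positivity [xi_pos y]), ← Real.rpow_natCast,
    ← Real.rpow_mul (xi_pos y).le]
  norm_num [Real.rpow_neg_one]

lemma chi_eq_arsinh {x : ℝ} (hx : -(1 / 2) ≤ x) : chi x = arsinh (4 * x + 2) := by
  have h1 : 4 * x ^ 2 + 4 * x + 1 = (2 * x + 1) ^ 2 := by ring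
  have h2 : 16 * x ^ 2 + 16 * x + 5 = 1 + (4 * x + 2) ^ 2 := by ring
  rw [chi, arsinh, h1, h2, Real.sqrt_sq (by linarith)]
  ring_nf

lemma abs_chi_add_half_sub_le {x : ℝ} (hx : 0 ≤ x) :
    |chi (x + 1 / 2) - chi x| ≤ 1 / (2 * x + 1) := by
  rw [chi_eq_arsinh (by linarith), chi_eq_arsinh (by linarith),
    show 4 * (x + 1 / 2) + 2 = (4 * x + 2) + 2 by ring]
  have hmono : arsinh (4 * x + 2) ≤ arsinh (4 * x + 2 + 2) := arsinh_le_arsinh.mpr (by linarith)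
  have hle := Real.arsinh_add_le (u := 4 * x + 2) (by linarith) zero_le_two
  rw [abs_of_nonneg (by linarith), show 1 / (2 * x + 1) = 2 / (4 * x + 2) by field_simp; ring]
  linarith

noncomputable def planeWave (A : ℂ) (ω x : ℝ) : ℂ := A * exp (I * ω * chi x)

lemma norm_planeWave (A : ℂ) (ω x : ℝ) : ‖planeWave A ω x‖ = ‖A‖ := by
  rw [planeWave, norm_mul, Complex.norm_exp]
  simp

lemma norm_planeWave_add_half_sub_le (A : ℂ) (ω : ℝ) {x : ℝ} (hx : 0 ≤ x) :
    ‖planeWave A ω (x + 1 / 2) - planeWave A ω x‖ ≤ ‖A‖ * |ω| / (2 * x + 1) := by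
  have hsplit : planeWave A ω (x + 1 / 2) - planeWave A ω x
      = planeWave A ω x * (exp (I * ↑(ω * (chi (x + 1 / 2) - chi x))) - 1) := by
    rw [planeWave, planeWave, mul_sub_one, mul_assoc A, ← Complex.exp_add]
    push_cast
    ring_nf
  rw [hsplit, norm_mul, norm_planeWave, mul_div_assoc]
  gcongr
  calc _ ≤ ‖ω * (chi (x + 1 / 2) - chi x)‖ := norm_exp_I_mul_ofReal_sub_one_le
    _ ≤ |ω| * (1 / (2 * x + 1)) := by
        rw [Real.norm_eq_abs, abs_mul]; gcongr; exact abs_chi_add_half_sub_le hx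
    _ = _ := by ring

lemma fpw_eq_planeWave (A : ℂ) (ω s x : ℝ) :
    fpw A ω s x = ((xi (x + 1 / 2) ^ (-(1 / 2) : ℝ) : ℝ) : ℂ) *
      (planeWave A ω x - s * (starRingEnd ℂ) (planeWave A ω x)) := by
  rw [fpw, planeWave, map_mul, ← exp_conj]
  simp [mul_assoc]

lemma sq_norm_fpw_one (A : ℂ) (ω x : ℝ) :
    ‖fpw A ω 1 x‖ ^ 2 = 4 * (planeWave A ω x).im ^ 2 / xi (x + 1 / 2) := by
  rw [fpw_eq_planeWave, Complex.ofReal_one, one_mul, Complex.sub_conj, norm_mul, mul_pow,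
    sq_norm_xi_rpow_neg_half]
  simp only [one_div, ofReal_mul, ofReal_ofNat, Complex.norm_mul, Complex.norm_ofNat, norm_real,
    norm_eq_abs, norm_I, mul_one, mul_pow, sq_abs]
  ring

lemma sq_norm_fpw_neg_one (A : ℂ) (ω x : ℝ) :
    ‖fpw A ω (-1) x‖ ^ 2 = 4 * (planeWave A ω x).re ^ 2 / xi (x + 1 / 2) := by
  rw [fpw_eq_planeWave, Complex.ofReal_neg, Complex.ofReal_one, neg_one_mul, sub_neg_eq_add,
    Complex.add_conj, norm_mul, mul_pow, sq_norm_xi_rpow_neg_half]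
  simp only [one_div, ofReal_mul, ofReal_ofNat, Complex.norm_mul, Complex.norm_ofNat, norm_real,
    norm_eq_abs, mul_pow, sq_abs]
  ring

lemma le_sq_norm_fpw_add_sq_norm_fpw {A : ℂ} {ω x : ℝ} (hx : 2 * |ω| ≤ x) :
    2 * ‖A‖ ^ 2 / (x + 2) ≤ ‖fpw A ω 1 x‖ ^ 2 + ‖fpw A ω (-1) (x + 1 / 2)‖ ^ 2 := by
  set z := planeWave A ω x
  set z' := planeWave A ω (x + 1 / 2)
  have hx0 : 0 ≤ x := by linarith [abs_nonneg ω]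
  have hclose : ‖z - z'‖ ≤ ‖A‖ / 4 := by
    rw [norm_sub_rev]
    refine (norm_planeWave_add_half_sub_le A ω hx0).trans ?_
    rw [div_le_div_iff₀ (by linarith) (by norm_num)]
    nlinarith [norm_nonneg A]
  have hmix : ‖A‖ ^ 2 / 2 ≤ z.im ^ 2 + z'.re ^ 2 := by
    have := Complex.sq_norm_sub_le_im_sq_add_re_sq z z'
    rw [norm_planeWave] at this
    nlinarith [norm_nonneg A]
  have hxi : xi (x + 1 / 2) ≤ x + 2 := (xi_le_add_one (by linarith)).trans (by linarith)
  have hxi' : xi (x + 1 / 2 + 1 / 2) ≤ x + 2 := (xi_le_add_one (by linarith)).trans (by linarith)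
  rw [sq_norm_fpw_one, sq_norm_fpw_neg_one]
  calc 2 * ‖A‖ ^ 2 / (x + 2)
      ≤ 4 * z.im ^ 2 / (x + 2) + 4 * z'.re ^ 2 / (x + 2) := by
        rw [← add_div]
        gcongr
        linarith
    _ ≤ _ := by gcongr <;> exact xi_pos _

lemma not_summable_sq_norm_fpw {A : ℂ} (hA : A ≠ 0) (ω : ℝ) :
    ¬ Summable fun n : ℕ => ‖fpw A ω ((-1 : ℝ) ^ n) ((n : ℝ) / 2)‖ ^ 2 := by
  intro h
  have hpairs :
      Summable fun n : ℕ => ‖fpw A ω 1 n‖ ^ 2 + ‖fpw A ω (-1) (n + 1 / 2)‖ ^ 2 := by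
    have heven := h.comp_injective (i := fun n => 2 * n) fun _ _ h => by simp only at h; omega
    have hodd := h.comp_injective (i := fun n => 2 * n + 1) fun _ _ h => by simp only at h; omega
    refine (heven.add hodd).congr fun n => ?_
    simp only [Function.comp_apply, pow_succ, pow_mul, Nat.cast_mul, Nat.cast_succ]
    ring_nf
  have hharm : Summable fun n : ℕ => 2 * ‖A‖ ^ 2 / ((n : ℝ) + 2) := by
    refine hpairs.of_norm_bounded_eventually_nat ?_
    filter_upwards [eventually_ge_atTop ⌈2 * |ω|⌉₊] with n hn
    rw [Real.norm_of_nonneg (by positivity)]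
    exact le_sq_norm_fpw_add_sq_norm_fpw (Nat.ceil_le.mp hn)
  have hA₀ : 0 < ‖A‖ := norm_pos_iff.mpr hA
  refine Real.not_summable_one_div_natCast ((summable_nat_add_iff 2).mp ?_)
  refine (hharm.mul_left (2 * ‖A‖ ^ 2)⁻¹).congr fun n => ?_
  push_cast
  field_simp

lemma PlaneWaveAsymp.summable_sq_norm_sub {A : ℂ} {ω : ℝ} {φ : ℕ → ℂ}
    (h : PlaneWaveAsymp A ω φ) :
    Summable fun n : ℕ => ‖φ n - fpw A ω ((-1 : ℝ) ^ n) ((n : ℝ) / 2)‖ ^ 2 := by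
  obtain ⟨C, -, Δ, hΔ, N₀, hbound⟩ := h
  refine summable_sq_norm_of_le_rpow (C := C / 2 ^ (-Δ)) (Δ := Δ) (by linarith) ?_
  filter_upwards [eventually_ge_atTop N₀] with n hn
  rw [mul_comm_div, ← Real.div_rpow (Nat.cast_nonneg n) zero_le_two]
  exact hbound n hn

theorem eigenfunction_not_normalizable_general (ω : ℝ) (A : ℂ) (hA : A ≠ 0) (φ : ℕ → ℂ)
    (hasymp : PlaneWaveAsymp A ω φ) :
    ¬ Summable (fun n : ℕ => ‖φ n‖ ^ 2) := fun hφ =>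
  not_summable_sq_norm_fpw hA ω (hφ.sq_norm_of_sq_norm_sub hasymp.summable_sq_norm_sub)

/-- Non-normalizability of the generalized eigenfunctions: a solution φ of the
eigenvalue recurrence for ω with plane-wave asymptotics of amplitude A ≠ 0 satisfies
Σ_n |φ n|² = ∞, i.e. the sequence n ↦ |φ n|² is not summable. -/
theorem eigenfunction_not_normalizable (ω : ℝ) (A : ℂ) (hA : A ≠ 0) (φ : ℕ → ℂ)
    (hrec : SolvesRec ω φ) (hasymp : PlaneWaveAsymp A ω φ) :
    ¬ Summable (fun n : ℕ => ‖φ n‖ ^ 2) :=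
  eigenfunction_not_normalizable_general ω A hA φ hasymp
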